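/- The extreme points of the polytope AP = {w ∈ ℝ^{m×m}_{≥0} : each row sums to 1 and each column sums to 1} are exactly the 0/1 matrices in AP (the permutation matrices); in particular AP is an integral polytope. -/
import Mathlib

open Matrix Set

/-- The extreme points of the Birkhoff polytope of doubly stochastic `m × m`
matrices are exactly its 0/1 matrices (the permutation matrices); in particular
the Birkhoff polytope is integral. -/
theorem stmt8 (m : ℕ) (hm : 0 < m) :
    Set.extremePoints ℝ
        {w : Matrix (Fin m) (Fin m) ℝ |
          (∀ i j, 0 ≤ w i j) ∧ (∀ i, ∑ j, w i j = 1) ∧ (∀ j, ∑ i, w i j = 1)}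
      = {w : Matrix (Fin m) (Fin m) ℝ |
          ((∀ i j, 0 ≤ w i j) ∧ (∀ i, ∑ j, w i j = 1) ∧ (∀ j, ∑ i, w i j = 1)) ∧
          ∀ i j, w i j = 0 ∨ w i j = 1} := by
  have hset : {w : Matrix (Fin m) (Fin m) ℝ |
      (∀ i j, 0 ≤ w i j) ∧ (∀ i, ∑ j, w i j = 1) ∧ (∀ j, ∑ i, w i j = 1)}
      = ↑(doublyStochastic ℝ (Fin m)) := by
    ext w
    simp [mem_doublyStochastic_iff_sum]
  ext w
  constructor
  · intro hw
    have hwA := extremePoints_subset hw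
    refine ⟨hwA, ?_⟩
    rw [hset, doublyStochastic_eq_convexHull_permMatrix] at hw
    obtain ⟨σ, hσ⟩ := extremePoints_convexHull_subset hw
    intro i j
    rw [← hσ]
    by_cases h : σ i = j <;> simp [Equiv.Perm.permMatrix, PEquiv.toMatrix_apply,
      Equiv.toPEquiv, Matrix.one_apply, h]
  · rintro ⟨⟨hnn, hrow, hcol⟩, h01⟩
    rw [mem_extremePoints]
    refine ⟨⟨hnn, hrow, hcol⟩, ?_⟩
    rintro x ⟨hxnn, hxrow, hxcol⟩ y ⟨hynn, hyrow, hycol⟩ ⟨a, b, ha, hb, hab, hsum⟩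
    have key : ∀ i j, x i j = w i j ∧ y i j = w i j := by
      intro i j
      have hx1 : x i j ≤ 1 := by
        rw [← hxrow i]
        exact Finset.single_le_sum (fun k _ => hxnn i k) (Finset.mem_univ j)
      have hy1 : y i j ≤ 1 := by
        rw [← hyrow i]
        exact Finset.single_le_sum (fun k _ => hynn i k) (Finset.mem_univ j)
      have hs : a * x i j + b * y i j = w i j := by
        have := congrFun (congrFun hsum i) j
        simpa using this
      rcases h01 i j with h0 | h1
      · rw [h0] at hs ⊢
        have hx0 : x i j = 0 := by nlinarith [hxnn i j, hynn i j]
        have hy0 : y i j = 0 := by nlinarith [hxnn i j, hynn i j]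
        exact ⟨hx0, hy0⟩
      · rw [h1] at hs ⊢
        constructor <;> nlinarith [hxnn i j, hynn i j]
    constructor <;> ext i j
    · exact (key i j).1
    · exact (key i j).2
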